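/- Under the neutrality condition Σ_{k=1}^N α_k = 2Q, the function C(z₁,…,z_N) = ∏_{k<l}|z_k - z_l|^{-⟨α_k,α_l⟩} is Möbius covariant: for every Möbius transformation ψ of the Riemann sphere (with all ψ(z_k) finite), C(z₁,…,z_N) = ∏_{k=1}^N |ψ'(z_k)|^{2Δ_{α_k}} · C(ψ(z₁),…,ψ(z_N)), where Δ_α = ⟨α/2, Q - α/2⟩. -/

import Mathlib

/-!
With `s k = ‖c * z k + d‖⁻¹`, so that `‖ψ' (z k)‖ = s k ^ 2`, the Möbius map rescales every
distance: `‖ψ (z k) - ψ (z l)‖ = ‖z k - z l‖ * (s k * s l)`. Hence `C (ψ ∘ z)` is `C z` times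
`∏ k, s k ^ (-∑_{l ≠ k} ⟨α k, α l⟩)`, and neutrality turns `∑_{l ≠ k} ⟨α k, α l⟩` into
`2 ⟨α k, Q⟩ - ⟨α k, α k⟩ = 4 Δ_{α k}`, which is exactly what `‖ψ' (z k)‖ ^ (2 Δ_{α k})` cancels.
-/

open Finset

theorem mobius_sub_mobius {K : Type*} [Field K] {a b c d z w : K} (habcd : a * d - b * c = 1)
    (hz : c * z + d ≠ 0) (hw : c * w + d ≠ 0) :
    (a * z + b) / (c * z + d) - (a * w + b) / (c * w + d)
      = (z - w) / ((c * z + d) * (c * w + d)) := by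
  rw [div_sub_div _ _ hz hw, div_eq_div_iff (mul_ne_zero hz hw) (mul_ne_zero hz hw)]
  linear_combination (z - w) * (c * z + d) * (c * w + d) * habcd

theorem norm_mobius_sub_mobius {K : Type*} [NormedField K] {a b c d z w : K}
    (habcd : a * d - b * c = 1) (hz : c * z + d ≠ 0) (hw : c * w + d ≠ 0) :
    ‖(a * z + b) / (c * z + d) - (a * w + b) / (c * w + d)‖
      = ‖z - w‖ * (‖c * z + d‖⁻¹ * ‖c * w + d‖⁻¹) := by
  rw [mobius_sub_mobius habcd hz hw, norm_div, norm_mul, div_eq_mul_inv, mul_inv]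

section Correlation

variable {ι : Type*} [Fintype ι] [LinearOrder ι] [LocallyFiniteOrderTop ι]
  [LocallyFiniteOrderBot ι]

theorem prod_prod_Ioi_mul_rpow_of_symm {s : ι → ℝ} (hs : ∀ k, 0 < s k) {A : ι → ι → ℝ}
    (hA : ∀ k l, A k l = A l k) :
    ∏ k, ∏ l ∈ Ioi k, (s k * s l) ^ A k l = ∏ k, s k ^ ∑ l ∈ {k}ᶜ, A k l := by
  calc ∏ k, ∏ l ∈ Ioi k, (s k * s l) ^ A k l
      = ∏ k, ∏ l ∈ Ioi k, s k ^ A k l * s l ^ A l k := by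
        refine prod_congr rfl fun k _ => prod_congr rfl fun l _ => ?_
        rw [Real.mul_rpow (hs k).le (hs l).le, hA l k]
    _ = ∏ k, ∏ l ∈ {k}ᶜ, s k ^ A k l :=
        prod_prod_Ioi_mul_eq_prod_prod_off_diag (fun l k => s k ^ A k l)
    _ = ∏ k, s k ^ ∑ l ∈ {k}ᶜ, A k l :=
        prod_congr rfl fun k _ => (Real.rpow_sum_of_pos (hs k) _ _).symm

noncomputable def pairCorrelation {E : Type*} [SeminormedAddCommGroup E] (A : ι → ι → ℝ)
    (w : ι → E) : ℝ :=
  ∏ k, ∏ l ∈ univ.filter (fun l => k < l), ‖w k - w l‖ ^ (-A k l)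

theorem pairCorrelation_eq_mul_of_norm_sub_eq {E F : Type*} [SeminormedAddCommGroup E]
    [SeminormedAddCommGroup F] {A : ι → ι → ℝ} (hA : ∀ k l, A k l = A l k) {w : ι → E}
    {w' : ι → F} {s : ι → ℝ} (hs : ∀ k, 0 < s k)
    (hw : ∀ k l, ‖w' k - w' l‖ = ‖w k - w l‖ * (s k * s l)) :
    pairCorrelation A w' = pairCorrelation A w * ∏ k, s k ^ (-∑ l ∈ {k}ᶜ, A k l) := by
  have hA' : ∀ k l, -A k l = -A l k := fun k l => by rw [hA]
  simp only [pairCorrelation, filter_lt_eq_Ioi, hw, ← sum_neg_distrib]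
  rw [← prod_prod_Ioi_mul_rpow_of_symm hs hA', ← prod_mul_distrib]
  refine prod_congr rfl fun k _ => ?_
  rw [← prod_mul_distrib]
  exact prod_congr rfl fun l _ =>
    Real.mul_rpow (norm_nonneg _) (mul_pos (hs k) (hs l)).le

end Correlation

theorem sum_compl_inner_eq_of_sum_eq {ι ρ : Type*} [Fintype ι] [DecidableEq ι] [Fintype ρ]
    {α : ι → ρ → ℝ} {Q : ρ → ℝ} (hneutral : ∀ j, ∑ k, α k j = 2 * Q j) (k : ι) :
    ∑ l ∈ {k}ᶜ, ∑ j, α k j * α l j = 4 * ∑ j, α k j / 2 * (Q j - α k j / 2) := by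
  have htotal : ∑ l, ∑ j, α k j * α l j = ∑ j, α k j * (2 * Q j) := by
    rw [sum_comm]
    exact sum_congr rfl fun j _ => by rw [← mul_sum, hneutral j]
  rw [eq_sub_of_add_eq (sum_compl_add_sum {k} fun l => ∑ j, α k j * α l j), sum_singleton,
    htotal, mul_sum, ← sum_sub_distrib]
  exact sum_congr rfl fun j _ => by ring

theorem freefield_correlation_mobius_covariance_general
    (N r : ℕ) (α : Fin N → Fin r → ℝ) (Q : Fin r → ℝ) (z : Fin N → ℂ)
    (a b c d : ℂ) (habcd : a * d - b * c = 1)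
    (hden : ∀ k, c * z k + d ≠ 0)
    (hneutral : ∀ j, ∑ k, α k j = 2 * Q j) :
    let ψ : ℂ → ℂ := fun w => (a * w + b) / (c * w + d)
    let ψ' : ℂ → ℂ := fun w => 1 / (c * w + d) ^ 2
    let C : (Fin N → ℂ) → ℝ := fun w =>
      ∏ k, ∏ l ∈ Finset.univ.filter (fun l => k < l),
        ‖w k - w l‖ ^ (-(∑ j, α k j * α l j))
    C z = (∏ k, ‖ψ' (z k)‖
              ^ (2 * (∑ j, (α k j / 2) * (Q j - α k j / 2))))
            * C (fun k => ψ (z k)) := by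
  intro ψ ψ' C
  let s : Fin N → ℝ := fun k => ‖c * z k + d‖⁻¹
  have hs : ∀ k, 0 < s k := fun k => inv_pos.2 (norm_pos_iff.2 (hden k))
  have hψ' : ∀ k, ‖ψ' (z k)‖ = s k ^ (2 : ℝ) := fun k => by
    simp [ψ', s, norm_pow]
  have hC := pairCorrelation_eq_mul_of_norm_sub_eq (A := fun k l => ∑ j, α k j * α l j)
    (fun k l => sum_congr rfl fun j _ => mul_comm _ _) hs (w := z) (w' := fun k => ψ (z k))
    fun k l => norm_mobius_sub_mobius habcd (hden k) (hden l)
  have hcancel : ∀ k, ‖ψ' (z k)‖ ^ (2 * ∑ j, α k j / 2 * (Q j - α k j / 2)) *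
      s k ^ (-∑ l ∈ {k}ᶜ, ∑ j, α k j * α l j) = 1 := fun k => by
    rw [hψ', ← Real.rpow_mul (hs k).le, ← Real.rpow_add (hs k),
      sum_compl_inner_eq_of_sum_eq hneutral k, ← Real.rpow_zero (s k)]
    congr 1
    ring
  change pairCorrelation _ z = _ * pairCorrelation _ (fun k => ψ (z k))
  rw [hC, mul_left_comm, ← prod_mul_distrib, prod_congr rfl fun k _ => hcancel k,
    prod_const_one, mul_one]

/-- Möbius covariance of free-field correlation functions: under the neutrality condition
`Σ_k α_k = 2Q`, the function `C(z₁,…,z_N) = ∏_{k<l}|z_k - z_l|^{-⟨α_k,α_l⟩}` satisfies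
`C(z₁,…,z_N) = ∏_k |ψ'(z_k)|^{2Δ_{α_k}} · C(ψ(z₁),…,ψ(z_N))` for every Möbius map
`ψ(z) = (az+b)/(cz+d)` with `ad - bc = 1` (so `ψ'(z) = 1/(cz+d)²`), all `ψ(z_k)` finite,
and `Δ_α = ⟨α/2, Q - α/2⟩`. Inner products are in coordinates. -/
theorem freefield_correlation_mobius_covariance
    (N r : ℕ) (α : Fin N → Fin r → ℝ) (Q : Fin r → ℝ) (z : Fin N → ℂ)
    (a b c d : ℂ) (habcd : a * d - b * c = 1)
    (hz : Function.Injective z) (hden : ∀ k, c * z k + d ≠ 0)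
    (hneutral : ∀ j, ∑ k, α k j = 2 * Q j) :
    let ψ : ℂ → ℂ := fun w => (a * w + b) / (c * w + d)
    let ψ' : ℂ → ℂ := fun w => 1 / (c * w + d) ^ 2
    let C : (Fin N → ℂ) → ℝ := fun w =>
      ∏ k, ∏ l ∈ Finset.univ.filter (fun l => k < l),
        ‖w k - w l‖ ^ (-(∑ j, α k j * α l j))
    C z = (∏ k, ‖ψ' (z k)‖
              ^ (2 * (∑ j, (α k j / 2) * (Q j - α k j / 2))))
            * C (fun k => ψ (z k)) :=
  freefield_correlation_mobius_covariance_general N r α Q z a b c d habcd hden hneutral
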